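/- Let θ ∈ (0, π), φ ∈ ℝ and α, β ∈ ℂ. Then the super-coherent states |β,θ,φ⟩_{L±} and |α,θ,φ⟩_{L±} are orthogonal if and only if β = α + (√2/sin(θ/2))·e^{iφ} or β = α − (√2/sin(θ/2))·e^{iφ}. In particular, writing C = sin²(θ/2) for the concurrence, for every α the two antipodal states with parameters β± = α ± √(2/C)·e^{iφ} are exactly the states of the same type orthogonal to |α,θ,φ⟩_{L±}. -/

import Mathlib

open scoped InnerProductSpace ComplexConjugate

noncomputable section

/-- The Hilbert space `ℓ²(ℕ, ℂ)` of square-summable complex sequences. -/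
abbrev H : Type := lp (fun _ : ℕ => ℂ) 2

/-- The componentwise-sum inner product on fermion–boson states in `H × H`. -/
noncomputable def pinner (Φ Ψ : H × H) : ℂ := ⟪Φ.1, Ψ.1⟫_ℂ + ⟪Φ.2, Ψ.2⟫_ℂ

/-- The displaced Fock state `ψ0^α = D(α)|0⟩` as a coefficient sequence. -/
noncomputable def psi0 (α : ℂ) : ℕ → ℂ := fun n =>
  Complex.exp (-(‖α‖ ^ 2 : ℝ) / 2) * α ^ n / Real.sqrt n.factorial

/-- The displaced Fock state `ψ1^α = D(α)|1⟩` as a coefficient sequence. -/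
noncomputable def psi1 (α : ℂ) : ℕ → ℂ := fun n =>
  if n = 0 then -conj α * Complex.exp (-(‖α‖ ^ 2 : ℝ) / 2)
  else Complex.exp (-(‖α‖ ^ 2 : ℝ) / 2) * α ^ (n - 1) * ((n : ℂ) - (‖α‖ ^ 2 : ℝ)) /
    Real.sqrt n.factorial

namespace SCaux

lemma hs0 (z : ℂ) : HasSum (fun n : ℕ => z ^ n / n.factorial) (Complex.exp z) := by
  rw [Complex.exp_eq_exp_ℂ]; exact NormedSpace.expSeries_div_hasSum_exp z

/-- shifted-by-one exponential series -/
noncomputable def f1 (z : ℂ) : ℕ → ℂ := fun n =>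
  if n = 0 then 0 else z ^ (n - 1) / (n - 1).factorial

/-- shifted-by-two exponential series -/
noncomputable def f2 (z : ℂ) : ℕ → ℂ := fun n =>
  if n ≤ 1 then 0 else z ^ (n - 2) / (n - 2).factorial

lemma hs1 (z : ℂ) : HasSum (f1 z) (Complex.exp z) := by
  rw [← hasSum_nat_add_iff' 1]
  simpa [f1] using hs0 z

lemma hs2 (z : ℂ) : HasSum (f2 z) (Complex.exp z) := by
  rw [← hasSum_nat_add_iff' 2]
  simpa [f2, Finset.sum_range_succ] using hs0 z

lemma norm_sq_eq (α : ℂ) : ((‖α‖^2 : ℝ) : ℂ) = conj α * α := by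
  rw [Complex.conj_mul']; norm_cast

/-- the real-exponential prefactor -/
noncomputable def E (α : ℂ) : ℂ := Complex.exp (-(‖α‖ ^ 2 : ℝ) / 2)

lemma conj_E (α : ℂ) : conj (E α) = E α := by
  rw [E, ← Complex.exp_conj]; congr 1
  simp [map_div₀, map_ofNat]

lemma E_ne (α : ℂ) : E α ≠ 0 := Complex.exp_ne_zero _

/-- the coherent overlap kernel -/
noncomputable def K (β α : ℂ) : ℂ := E β * E α * Complex.exp (conj β * α)

lemma K_ne (β α : ℂ) : K β α ≠ 0 := by
  exact mul_ne_zero (mul_ne_zero (E_ne β) (E_ne α)) (Complex.exp_ne_zero _)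

lemma sqrt_fac_mul (n : ℕ) :
    ((Real.sqrt n.factorial : ℝ) : ℂ) * ((Real.sqrt n.factorial : ℝ) : ℂ) = (n.factorial : ℂ) := by
  rw [← Complex.ofReal_mul, Real.mul_self_sqrt (by positivity)]
  norm_cast

lemma sqrt_fac_ne (n : ℕ) : ((Real.sqrt n.factorial : ℝ) : ℂ) ≠ 0 := by
  have : (0:ℝ) < Real.sqrt n.factorial := Real.sqrt_pos.2 (by positivity)
  exact_mod_cast this.ne'

lemma fac_ne (n : ℕ) : (n.factorial : ℂ) ≠ 0 := by
  exact_mod_cast n.factorial_ne_zero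

lemma hsum00 (β α : ℂ) :
    HasSum (fun n => conj (psi0 β n) * psi0 α n) (K β α) := by
  have h := (hs0 (conj β * α)).mul_left (E β * E α)
  have heq : ∀ n : ℕ, conj (psi0 β n) * psi0 α n
      = E β * E α * ((conj β * α) ^ n / n.factorial) := by
    intro n
    show conj (E β * β ^ n / ((Real.sqrt n.factorial : ℝ) : ℂ)) *
        (E α * α ^ n / ((Real.sqrt n.factorial : ℝ) : ℂ)) = _
    simp only [map_div₀, map_mul, map_pow, Complex.conj_ofReal, conj_E]
    rw [div_mul_div_comm, sqrt_fac_mul, mul_pow]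
    ring
  rw [show (fun n => conj (psi0 β n) * psi0 α n) = _ from funext heq]
  exact h

lemma hsum01 (β α : ℂ) :
    HasSum (fun n => conj (psi0 β n) * psi1 α n) (K β α * (conj β - conj α)) := by
  set z := conj β * α with hz
  have h := (((hs1 z).mul_left (conj β)).sub ((hs0 z).mul_left (conj α))).mul_left (E β * E α)
  have heq : ∀ n : ℕ, conj (psi0 β n) * psi1 α n
      = E β * E α * (conj β * f1 z n - conj α * (z ^ n / n.factorial)) := by
    intro n
    cases n with
    | zero =>
      show conj (E β * β ^ 0 / ((Real.sqrt (Nat.factorial 0) : ℝ) : ℂ)) *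
          (-conj α * E α) = _
      simp [f1, conj_E]
      ring
    | succ m =>
      show conj (E β * β ^ (m + 1) / ((Real.sqrt (Nat.factorial (m + 1)) : ℝ) : ℂ)) *
          (E α * α ^ m * (((m + 1 : ℕ) : ℂ) - ((‖α‖ ^ 2 : ℝ) : ℂ)) /
            ((Real.sqrt (Nat.factorial (m + 1)) : ℝ) : ℂ)) = _
      simp only [map_div₀, map_mul, map_pow, Complex.conj_ofReal, conj_E]
      rw [div_mul_div_comm, sqrt_fac_mul, norm_sq_eq]
      simp only [f1, Nat.succ_ne_zero, if_false, Nat.add_sub_cancel]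
      have hfs : ((Nat.factorial (m + 1) : ℂ)) = ((m + 1 : ℕ) : ℂ) * (Nat.factorial m : ℂ) := by
        push_cast [Nat.factorial_succ]; ring
      rw [hfs]
      have hm : ((m + 1 : ℕ) : ℂ) ≠ 0 := Nat.cast_ne_zero.mpr (Nat.succ_ne_zero m)
      have hD : ((m + 1 : ℕ) : ℂ) * (m.factorial : ℂ) ≠ 0 := mul_ne_zero hm (fac_ne m)
      simp only [← mul_div_assoc]
      rw [div_sub_div _ _ (fac_ne m) hD]
      simp only [← mul_div_assoc]
      rw [div_eq_div_iff hD (mul_ne_zero (fac_ne m) hD)]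
      ring
  rw [show (fun n => conj (psi0 β n) * psi1 α n) = _ from funext heq]
  convert h using 1
  · rfl
  · rw [K]; ring

lemma hsum10 (β α : ℂ) :
    HasSum (fun n => conj (psi1 β n) * psi0 α n) (K β α * (α - β)) := by
  set z := conj β * α with hz
  have h := (((hs1 z).mul_left α).sub ((hs0 z).mul_left β)).mul_left (E β * E α)
  have heq : ∀ n : ℕ, conj (psi1 β n) * psi0 α n
      = E β * E α * (α * f1 z n - β * (z ^ n / n.factorial)) := by
    intro n
    cases n with
    | zero =>
      show conj (-conj β * E β) * (E α * α ^ 0 / ((Real.sqrt (Nat.factorial 0) : ℝ) : ℂ)) = _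
      simp [f1, conj_E]
      ring
    | succ m =>
      show conj (E β * β ^ m * (((m + 1 : ℕ) : ℂ) - ((‖β‖ ^ 2 : ℝ) : ℂ)) /
            ((Real.sqrt (Nat.factorial (m + 1)) : ℝ) : ℂ)) *
          (E α * α ^ (m + 1) / ((Real.sqrt (Nat.factorial (m + 1)) : ℝ) : ℂ)) = _
      simp only [map_div₀, map_mul, map_pow, map_sub, Complex.conj_ofReal, conj_E,
        map_natCast]
      rw [div_mul_div_comm, sqrt_fac_mul, norm_sq_eq]
      simp only [f1, Nat.succ_ne_zero, if_false, Nat.add_sub_cancel]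
      have hfs : ((Nat.factorial (m + 1) : ℂ)) = ((m + 1 : ℕ) : ℂ) * (Nat.factorial m : ℂ) := by
        push_cast [Nat.factorial_succ]; ring
      rw [hfs]
      have hm : ((m + 1 : ℕ) : ℂ) ≠ 0 := Nat.cast_ne_zero.mpr (Nat.succ_ne_zero m)
      have hD : ((m + 1 : ℕ) : ℂ) * (m.factorial : ℂ) ≠ 0 := mul_ne_zero hm (fac_ne m)
      simp only [← mul_div_assoc]
      rw [div_sub_div _ _ (fac_ne m) hD]
      simp only [← mul_div_assoc]
      rw [div_eq_div_iff hD (mul_ne_zero (fac_ne m) hD)]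
      ring
  rw [show (fun n => conj (psi1 β n) * psi0 α n) = _ from funext heq]
  convert h using 1
  · rfl
  · rw [K]; ring

lemma hsum11 (β α : ℂ) :
    HasSum (fun n => conj (psi1 β n) * psi1 α n)
      (K β α * (1 + conj β * α + conj α * β - conj α * α - conj β * β)) := by
  set z := conj β * α with hz
  have h := ((((hs2 z).mul_left z).add
      ((hs1 z).mul_left (1 - conj α * α - conj β * β))).add
      ((hs0 z).mul_left (conj α * β))).mul_left (E β * E α)
  have heq : ∀ n : ℕ, conj (psi1 β n) * psi1 α n
      = E β * E α * (z * f2 z n + (1 - conj α * α - conj β * β) * f1 z n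
          + conj α * β * (z ^ n / n.factorial)) := by
    intro n
    have hcc : conj (conj β * β) = conj β * β := by simp [mul_comm]
    rcases n with _ | _ | m
    · show conj (-conj β * E β) * (-conj α * E α) = _
      simp [f1, f2, conj_E]
      ring
    · show conj (E β * β ^ 0 * (((1 : ℕ) : ℂ) - ((‖β‖ ^ 2 : ℝ) : ℂ)) /
            ((Real.sqrt (Nat.factorial 1) : ℝ) : ℂ)) *
          (E α * α ^ 0 * (((1 : ℕ) : ℂ) - ((‖α‖ ^ 2 : ℝ) : ℂ)) /
            ((Real.sqrt (Nat.factorial 1) : ℝ) : ℂ)) = _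
      simp only [map_div₀, map_mul, map_pow, map_sub, Complex.conj_ofReal, conj_E,
        map_natCast]
      rw [norm_sq_eq, norm_sq_eq]
      simp [f1, f2]
      ring
    · simp only [show m + 1 + 1 = m + 2 from rfl]
      show conj (E β * β ^ (m + 1) * (((m + 2 : ℕ) : ℂ) - ((‖β‖ ^ 2 : ℝ) : ℂ)) /
            ((Real.sqrt (Nat.factorial (m + 2)) : ℝ) : ℂ)) *
          (E α * α ^ (m + 1) * (((m + 2 : ℕ) : ℂ) - ((‖α‖ ^ 2 : ℝ) : ℂ)) /
            ((Real.sqrt (Nat.factorial (m + 2)) : ℝ) : ℂ)) = _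
      simp only [map_div₀, map_mul, map_pow, map_sub, Complex.conj_ofReal, conj_E,
        map_natCast]
      rw [div_mul_div_comm, sqrt_fac_mul, norm_sq_eq, norm_sq_eq]
      simp only [f1, f2, Nat.succ_ne_zero, if_false, Nat.add_sub_cancel,
        show ¬ (m + 2 ≤ 1) by omega, show m + 2 - 2 = m from rfl, show m + 2 - 1 = m + 1 from rfl]
      have hf1 : ((Nat.factorial (m + 2) : ℂ)) = ((m + 2 : ℕ) : ℂ) * ((m + 1 : ℕ) : ℂ)
          * (Nat.factorial m : ℂ) := by
        push_cast [Nat.factorial_succ]; ring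
      have hf2 : ((Nat.factorial (m + 1) : ℂ)) = ((m + 1 : ℕ) : ℂ) * (Nat.factorial m : ℂ) := by
        push_cast [Nat.factorial_succ]; ring
      rw [hf1, hf2]
      have hm1 : ((m + 1 : ℕ) : ℂ) ≠ 0 := Nat.cast_ne_zero.mpr (Nat.succ_ne_zero m)
      have hm2 : ((m + 2 : ℕ) : ℂ) ≠ 0 := Nat.cast_ne_zero.mpr (Nat.succ_ne_zero (m + 1))
      have hD1 : ((m + 1 : ℕ) : ℂ) * (m.factorial : ℂ) ≠ 0 := mul_ne_zero hm1 (fac_ne m)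
      have hD2 : ((m + 2 : ℕ) : ℂ) * ((m + 1 : ℕ) : ℂ) * (m.factorial : ℂ) ≠ 0 :=
        mul_ne_zero (mul_ne_zero hm2 hm1) (fac_ne m)
      simp only [← mul_div_assoc]
      rw [div_add_div _ _ (fac_ne m) hD1, div_add_div _ _ (mul_ne_zero (fac_ne m) hD1) hD2]
      simp only [← mul_div_assoc]
      rw [div_eq_div_iff hD2 (mul_ne_zero (mul_ne_zero (fac_ne m) hD1) hD2)]
      push_cast
      ring
  rw [show (fun n => conj (psi1 β n) * psi1 α n) = _ from funext heq]
  convert h using 1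
  · rfl
  · rw [K]; ring

lemma inner_mk (f g : ℕ → ℂ) (hf : Memℓp f 2) (hg : Memℓp g 2) :
    ⟪(⟨f, hf⟩ : H), (⟨g, hg⟩ : H)⟫_ℂ = ∑' n, conj (f n) * g n := by
  rw [lp.inner_eq_tsum]; congr 1; funext n; rw [RCLike.inner_apply, mul_comm]

lemma inner00 (β α : ℂ) (h : Memℓp (psi0 β) 2) (h' : Memℓp (psi0 α) 2) :
    ⟪(⟨psi0 β, h⟩ : H), (⟨psi0 α, h'⟩ : H)⟫_ℂ = K β α := by
  rw [inner_mk]; exact (hsum00 β α).tsum_eq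

lemma inner01 (β α : ℂ) (h : Memℓp (psi0 β) 2) (h' : Memℓp (psi1 α) 2) :
    ⟪(⟨psi0 β, h⟩ : H), (⟨psi1 α, h'⟩ : H)⟫_ℂ = K β α * (conj β - conj α) := by
  rw [inner_mk]; exact (hsum01 β α).tsum_eq

lemma inner10 (β α : ℂ) (h : Memℓp (psi1 β) 2) (h' : Memℓp (psi0 α) 2) :
    ⟪(⟨psi1 β, h⟩ : H), (⟨psi0 α, h'⟩ : H)⟫_ℂ = K β α * (α - β) := by
  rw [inner_mk]; exact (hsum10 β α).tsum_eq

lemma inner11 (β α : ℂ) (h : Memℓp (psi1 β) 2) (h' : Memℓp (psi1 α) 2) :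
    ⟪(⟨psi1 β, h⟩ : H), (⟨psi1 α, h'⟩ : H)⟫_ℂ
      = K β α * (1 + conj β * α + conj α * β - conj α * α - conj β * β) := by
  rw [inner_mk]; exact (hsum11 β α).tsum_eq

lemma key (c : ℝ) (hc : 0 < c) (w : ℂ) :
    1 + (c : ℂ) * (conj w - w) - w * conj w = 0 ↔ w = 1 ∨ w = -1 := by
  constructor
  · intro h
    rw [Complex.ext_iff] at h
    obtain ⟨h1, h2⟩ := h
    simp only [Complex.add_re, Complex.sub_re, Complex.mul_re, Complex.mul_im,
      Complex.add_im, Complex.sub_im, Complex.conj_re, Complex.conj_im,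
      Complex.ofReal_re, Complex.ofReal_im, Complex.one_re, Complex.one_im,
      Complex.zero_re, Complex.zero_im] at h1 h2
    have him : w.im = 0 := by
      have h3 : c * w.im = 0 := by linarith
      rcases mul_eq_zero.1 h3 with h' | h'
      · exact absurd h' hc.ne'
      · exact h'
    have hre : (w.re - 1) * (w.re + 1) = 0 := by nlinarith
    rcases mul_eq_zero.1 hre with h' | h'
    · left; rw [Complex.ext_iff]; constructor <;> simp [him] <;> linarith
    · right; rw [Complex.ext_iff]; constructor <;> simp [him] <;> linarith
  · rintro (rfl | rfl) <;> simp

end SCaux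

/-- The super-coherent state `|α,θ,φ⟩_{L_ε}` (sign `ε = ±1`) as an element of `H × H`,
given square-summability witnesses for the displaced Fock states. -/
noncomputable def scL (θ φ : ℝ) (ε α : ℂ)
    (h0 : Memℓp (psi0 α) 2) (h1 : Memℓp (psi1 α) 2) : H × H :=
  ((Real.cos (θ / 2) : ℂ) • (⟨psi0 α, h0⟩ : H) +
      ((Real.sin (θ / 2) : ℂ) * Complex.exp (φ * Complex.I) / Real.sqrt 2) •
        (⟨psi1 α, h1⟩ : H),
    (ε * ((Real.sin (θ / 2) : ℂ) * Complex.exp (φ * Complex.I) / Real.sqrt 2)) •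
      (⟨psi0 α, h0⟩ : H))

open SCaux in
/-- For `θ ∈ (0, π)`, the super-coherent states `|β,θ,φ⟩_{L±}` and `|α,θ,φ⟩_{L±}`
are orthogonal if and only if `β = α + (√2/sin(θ/2))·e^{iφ}` or
`β = α − (√2/sin(θ/2))·e^{iφ}`; writing `C = sin²(θ/2)` for the concurrence, these
are exactly the two antipodal parameters `β± = α ± √(2/C)·e^{iφ}`. -/
theorem supercoherent_orthogonality_antipodal (θ φ : ℝ) (hθ0 : 0 < θ) (hθπ : θ < Real.pi)
    (ε : ℂ) (hε : ε = 1 ∨ ε = -1) (α : ℂ)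
    (hm0 : ∀ γ : ℂ, Memℓp (psi0 γ) 2) (hm1 : ∀ γ : ℂ, Memℓp (psi1 γ) 2) :
    (∀ β : ℂ,
      pinner (scL θ φ ε β (hm0 β) (hm1 β)) (scL θ φ ε α (hm0 α) (hm1 α)) = 0 ↔
        β = α + ((Real.sqrt 2 / Real.sin (θ / 2) : ℝ) : ℂ) * Complex.exp (φ * Complex.I) ∨
        β = α - ((Real.sqrt 2 / Real.sin (θ / 2) : ℝ) : ℂ) * Complex.exp (φ * Complex.I)) ∧
    (∀ C : ℝ, C = Real.sin (θ / 2) ^ 2 →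
      {β : ℂ |
          pinner (scL θ φ ε β (hm0 β) (hm1 β)) (scL θ φ ε α (hm0 α) (hm1 α)) = 0} =
        {α + ((Real.sqrt (2 / C) : ℝ) : ℂ) * Complex.exp (φ * Complex.I),
          α - ((Real.sqrt (2 / C) : ℝ) : ℂ) * Complex.exp (φ * Complex.I)}) := by
  have hpi := Real.pi_pos
  have hs : 0 < Real.sin (θ / 2) :=
    Real.sin_pos_of_pos_of_lt_pi (by linarith) (by linarith)
  have hcpos : 0 < Real.cos (θ / 2) :=
    Real.cos_pos_of_mem_Ioo ⟨by linarith, by linarith⟩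
  have hsne : ((Real.sin (θ / 2) : ℝ) : ℂ) ≠ 0 := by exact_mod_cast hs.ne'
  have h2pos : (0 : ℝ) < Real.sqrt 2 := by positivity
  have h2ne : ((Real.sqrt 2 : ℝ) : ℂ) ≠ 0 := by exact_mod_cast h2pos.ne'
  have hee : Complex.exp (-(↑φ * Complex.I)) * Complex.exp (↑φ * Complex.I) = 1 := by
    rw [← Complex.exp_add, show (-(↑φ * Complex.I) + ↑φ * Complex.I : ℂ) = 0 by ring,
      Complex.exp_zero]
  have hconjU : conj ((Real.sin (θ / 2) : ℂ) * Complex.exp (φ * Complex.I) / Real.sqrt 2)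
      = (Real.sin (θ / 2) : ℂ) * Complex.exp (-(↑φ * Complex.I)) / (Real.sqrt 2 : ℝ) := by
    rw [map_div₀, map_mul, Complex.conj_ofReal, Complex.conj_ofReal, ← Complex.exp_conj,
      map_mul, Complex.conj_ofReal, Complex.conj_I, mul_neg]
  have hUU : conj ((Real.sin (θ / 2) : ℂ) * Complex.exp (φ * Complex.I) / Real.sqrt 2)
      * ((Real.sin (θ / 2) : ℂ) * Complex.exp (φ * Complex.I) / Real.sqrt 2)
      = ((Real.sin (θ / 2) : ℝ) : ℂ) ^ 2 / 2 := by
    rw [hconjU, div_mul_div_comm]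
    rw [show ((Real.sin (θ / 2) : ℂ) * Complex.exp (-(↑φ * Complex.I))) *
        ((Real.sin (θ / 2) : ℂ) * Complex.exp (φ * Complex.I))
        = ((Real.sin (θ / 2) : ℝ) : ℂ) ^ 2 *
          (Complex.exp (-(↑φ * Complex.I)) * Complex.exp (↑φ * Complex.I)) by ring]
    rw [hee, show ((Real.sqrt 2 : ℝ) : ℂ) * ((Real.sqrt 2 : ℝ) : ℂ) = 2 by
      rw [← Complex.ofReal_mul, Real.mul_self_sqrt (by norm_num)]; norm_num]
    ring
  have hεε : conj ε * ε = 1 := by rcases hε with rfl | rfl <;> simp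
  have hcs : ((Real.cos (θ / 2) : ℝ) : ℂ) ^ 2 + ((Real.sin (θ / 2) : ℝ) : ℂ) ^ 2 = 1 := by
    have h : Real.cos (θ / 2) ^ 2 + Real.sin (θ / 2) ^ 2 = 1 := by
      linarith [Real.sin_sq_add_cos_sq (θ / 2)]
    rw [← Complex.ofReal_pow, ← Complex.ofReal_pow, ← Complex.ofReal_add, h,
      Complex.ofReal_one]
  have hd : conj ((Real.sin (θ / 2) : ℂ) * Complex.exp (φ * Complex.I) / Real.sqrt 2)
      * (((Real.sqrt 2 / Real.sin (θ / 2) : ℝ) : ℂ) * Complex.exp (φ * Complex.I)) = 1 := by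
    rw [hconjU, Complex.ofReal_div]
    rw [show (Real.sin (θ / 2) : ℂ) * Complex.exp (-(↑φ * Complex.I)) / (Real.sqrt 2 : ℝ)
        * (((Real.sqrt 2 : ℝ) : ℂ) / ((Real.sin (θ / 2) : ℝ) : ℂ) * Complex.exp (φ * Complex.I))
        = (Complex.exp (-(↑φ * Complex.I)) * Complex.exp (↑φ * Complex.I))
          * ((((Real.sin (θ / 2) : ℝ) : ℂ) / ((Real.sin (θ / 2) : ℝ) : ℂ))
            * (((Real.sqrt 2 : ℝ) : ℂ) / ((Real.sqrt 2 : ℝ) : ℂ))) by ring]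
    rw [hee, div_self hsne, div_self h2ne]
    norm_num
  have hcUne : conj ((Real.sin (θ / 2) : ℂ) * Complex.exp (φ * Complex.I) / Real.sqrt 2) ≠ 0 := by
    refine left_ne_zero_of_mul (a := _)
      (b := (Real.sin (θ / 2) : ℂ) * Complex.exp (φ * Complex.I) / Real.sqrt 2) ?_
    rw [hUU]
    exact div_ne_zero (pow_ne_zero 2 hsne) two_ne_zero
  have main : ∀ β : ℂ,
      pinner (scL θ φ ε β (hm0 β) (hm1 β)) (scL θ φ ε α (hm0 α) (hm1 α)) = 0 ↔
        β = α + ((Real.sqrt 2 / Real.sin (θ / 2) : ℝ) : ℂ) * Complex.exp (φ * Complex.I) ∨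
        β = α - ((Real.sqrt 2 / Real.sin (θ / 2) : ℝ) : ℂ) * Complex.exp (φ * Complex.I) := by
    intro β
    have hexp : pinner (scL θ φ ε β (hm0 β) (hm1 β)) (scL θ φ ε α (hm0 α) (hm1 α))
        = K β α * (1 + ((Real.cos (θ / 2) : ℝ) : ℂ) *
            (conj (conj ((Real.sin (θ / 2) : ℂ) * Complex.exp (φ * Complex.I) / Real.sqrt 2)
                * (β - α))
              - conj ((Real.sin (θ / 2) : ℂ) * Complex.exp (φ * Complex.I) / Real.sqrt 2)
                * (β - α))
          - (conj ((Real.sin (θ / 2) : ℂ) * Complex.exp (φ * Complex.I) / Real.sqrt 2) * (β - α))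
            * conj (conj ((Real.sin (θ / 2) : ℂ) * Complex.exp (φ * Complex.I) / Real.sqrt 2)
                * (β - α))) := by
      simp only [pinner, scL, inner_add_left, inner_add_right, inner_smul_left, inner_smul_right,
        inner00, inner01, inner10, inner11, map_mul, map_sub, Complex.conj_conj,
        Complex.conj_ofReal]
      linear_combination (K β α * (1 + conj ε * ε)) * hUU
        + (K β α * (((Real.sin (θ / 2) : ℝ) : ℂ) ^ 2 / 2)) * hεε + K β α * hcs
    rw [hexp, mul_eq_zero]
    have hKne := K_ne β α
    simp only [hKne, false_or]
    rw [key (Real.cos (θ / 2)) hcpos]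
    constructor
    · rintro (hw | hw)
      · left
        rw [← hd] at hw
        have := mul_left_cancel₀ hcUne hw
        linear_combination this
      · right
        have h2 : conj ((Real.sin (θ / 2) : ℂ) * Complex.exp (φ * Complex.I) / Real.sqrt 2)
            * (β - α)
            = conj ((Real.sin (θ / 2) : ℂ) * Complex.exp (φ * Complex.I) / Real.sqrt 2)
              * (-(((Real.sqrt 2 / Real.sin (θ / 2) : ℝ) : ℂ)
                  * Complex.exp (φ * Complex.I))) := by
          rw [hw, mul_neg, hd]
        have := mul_left_cancel₀ hcUne h2
        linear_combination this
    · rintro (rfl | rfl)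
      · left
        rw [show α + ((Real.sqrt 2 / Real.sin (θ / 2) : ℝ) : ℂ) * Complex.exp (φ * Complex.I) - α
          = ((Real.sqrt 2 / Real.sin (θ / 2) : ℝ) : ℂ) * Complex.exp (φ * Complex.I) by ring, hd]
      · right
        rw [show α - ((Real.sqrt 2 / Real.sin (θ / 2) : ℝ) : ℂ) * Complex.exp (φ * Complex.I) - α
          = -(((Real.sqrt 2 / Real.sin (θ / 2) : ℝ) : ℂ) * Complex.exp (φ * Complex.I)) by ring,
          mul_neg, hd]
  refine ⟨main, ?_⟩
  intro C hC
  subst hC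
  have hsqrt : Real.sqrt (2 / Real.sin (θ / 2) ^ 2) = Real.sqrt 2 / Real.sin (θ / 2) := by
    rw [Real.sqrt_div (by norm_num : (0:ℝ) ≤ 2), Real.sqrt_sq hs.le]
  ext β
  simp only [Set.mem_setOf_eq, Set.mem_insert_iff, Set.mem_singleton_iff, hsqrt]
  exact main β
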